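/- arXiv:2210.08698 — 2 statements merged into one kernel-verified Lean document; each statement's English description precedes it below -/
import Mathlib

section
/- Suppose each linear functional Lᵢ satisfies positivity, i.e., there is C < ∞ with |Lᵢ(u)| ≤ C‖u‖₂ for all u ∈ Mᵢ and all i. Then there exists an unbiased estimator of the aggregate treatment effect; concretely, there exist measurable functions γ₁, …, γₙ : Ω → ℝ with ∫ γᵢ² dμ < ∞ such that the estimator T(ω, y) = (1/n) Σᵢ γᵢ(ω) yᵢ satisfies: for every (f₁, …, fₙ) ∈ M₁ × ⋯ × Mₙ, the function ω ↦ (1/n) Σᵢ γᵢ(ω) fᵢ(ω) is μ-integrable and ∫ (1/n) Σᵢ γᵢ(ω) fᵢ(ω) dμ(ω) = (1/n) Σᵢ Lᵢ(fᵢ). -/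
/-!
Positivity says that `Lᵢ` is bounded by the `L²(μ)` norm on `Mᵢ`; in particular it vanishes on
functions that are zero almost everywhere, so it descends to a bounded functional on the image of
`Mᵢ` in `L²(μ)`. Extending it by Hahn–Banach and applying the Riesz representation theorem gives
`γᵢ ∈ L²(μ)` with `Lᵢ u = ∫ γᵢ u dμ` on `Mᵢ`, and the estimator `(1/n) ∑ᵢ γᵢ yᵢ` is then unbiased
by linearity of the integral.
-/

open MeasureTheory

section RieszRepresentation

variable {𝕜 M E : Type*} [RCLike 𝕜] [AddCommGroup M] [Module 𝕜 M]

theorem exists_strongDual_comp_eq_of_norm_le [NormedAddCommGroup E] [NormedSpace 𝕜 E]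
    (T : M →ₗ[𝕜] E) (L : M →ₗ[𝕜] 𝕜) (C : ℝ) (hC : ∀ u, ‖L u‖ ≤ C * ‖T u‖) :
    ∃ g : StrongDual 𝕜 E, ∀ u, g (T u) = L u := by
  have hker : LinearMap.ker T ≤ LinearMap.ker L := fun u hu => by
    simpa [LinearMap.mem_ker.mp hu] using hC u
  let ℓ : LinearMap.range T →ₗ[𝕜] 𝕜 :=
    (LinearMap.ker T).liftQ L hker ∘ₗ T.quotKerEquivRange.symm.toLinearMap
  have hℓ : ∀ u, ℓ ⟨T u, LinearMap.mem_range_self T u⟩ = L u := fun u => by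
    simp [ℓ, LinearMap.quotKerEquivRange_symm_apply_image]
  have hℓC : ∀ x, ‖ℓ x‖ ≤ C * ‖x‖ := by
    rintro ⟨_, u, rfl⟩
    simpa [hℓ] using hC u
  obtain ⟨g, hg, -⟩ := exists_extension_norm_eq _ (ℓ.mkContinuous C hℓC)
  exact ⟨g, fun u => (hg _).trans (hℓ u)⟩

theorem exists_inner_eq_of_norm_le [NormedAddCommGroup E] [InnerProductSpace 𝕜 E]
    [CompleteSpace E] (T : M →ₗ[𝕜] E) (L : M →ₗ[𝕜] 𝕜) (C : ℝ) (hC : ∀ u, ‖L u‖ ≤ C * ‖T u‖) :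
    ∃ h : E, ∀ u, inner 𝕜 h (T u) = L u := by
  obtain ⟨g, hg⟩ := exists_strongDual_comp_eq_of_norm_le T L C hC
  exact ⟨(InnerProductSpace.toDual 𝕜 E).symm g, fun u =>
    InnerProductSpace.toDual_symm_apply.trans (hg u)⟩

end RieszRepresentation

section L2

variable {Ω : Type*} [MeasurableSpace Ω] {μ : Measure Ω}

section

variable {𝕜 E : Type*} {p : ENNReal} [NormedRing 𝕜] [NormedAddCommGroup E] [Module 𝕜 E]
  [IsBoundedSMul 𝕜 E]

def Submodule.toLpₗ (M : Submodule 𝕜 (Ω → E)) (hM : ∀ f ∈ M, MemLp f p μ) :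
    M →ₗ[𝕜] Lp E p μ where
  toFun f := (hM f f.2).toLp f
  map_add' f g := (MemLp.toLp_add (hM f f.2) (hM g g.2)).symm
  map_smul' c f := (MemLp.toLp_const_smul c (hM f f.2)).symm

theorem Submodule.toLpₗ_apply (M : Submodule 𝕜 (Ω → E)) (hM : ∀ f ∈ M, MemLp f p μ) (f : M) :
    M.toLpₗ hM f = (hM f f.2).toLp f :=
  rfl

end

theorem MeasureTheory.MemLp.integral_mul_eq_inner_toLp {f g : Ω → ℝ} (hf : MemLp f 2 μ)
    (hg : MemLp g 2 μ) : ∫ ω, f ω * g ω ∂μ = inner ℝ (hf.toLp f) (hg.toLp g) := by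
  rw [L2.inner_def]
  refine integral_congr_ae ?_
  filter_upwards [hf.coeFn_toLp, hg.coeFn_toLp] with ω hfω hgω
  simp [hfω, hgω, mul_comm]

theorem MeasureTheory.MemLp.norm_toLp_eq_sqrt_integral_sq {f : Ω → ℝ} (hf : MemLp f 2 μ) :
    ‖hf.toLp f‖ = √(∫ ω, f ω ^ 2 ∂μ) := by
  simp_rw [norm_eq_sqrt_real_inner, ← hf.integral_mul_eq_inner_toLp hf, sq]

theorem Submodule.exists_memLp_integral_mul_eq (M : Submodule ℝ (Ω → ℝ))
    (hM : ∀ f ∈ M, MemLp f 2 μ) (L : M →ₗ[ℝ] ℝ) (C : ℝ)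
    (hC : ∀ u : M, |L u| ≤ C * √(∫ ω, (u : Ω → ℝ) ω ^ 2 ∂μ)) :
    ∃ γ : Ω → ℝ, Measurable γ ∧ MemLp γ 2 μ ∧
      ∀ u : M, Integrable (fun ω => γ ω * (u : Ω → ℝ) ω) μ ∧
        ∫ ω, γ ω * (u : Ω → ℝ) ω ∂μ = L u := by
  obtain ⟨h, hh⟩ := exists_inner_eq_of_norm_le (M.toLpₗ hM) L C fun u => by
    rw [Real.norm_eq_abs, M.toLpₗ_apply, (hM u u.2).norm_toLp_eq_sqrt_integral_sq]
    exact hC u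
  set γ := (Lp.aestronglyMeasurable h).mk h
  have hγh : (h : Ω → ℝ) =ᵐ[μ] γ := (Lp.aestronglyMeasurable h).ae_eq_mk
  have hγ : MemLp γ 2 μ := (Lp.memLp h).ae_eq hγh
  have hγ_toLp : hγ.toLp γ = h := by
    rw [← Lp.toLp_coeFn h (Lp.memLp h)]
    exact (MemLp.toLp_eq_toLp_iff _ _).mpr hγh.symm
  refine ⟨γ, (Lp.aestronglyMeasurable h).stronglyMeasurable_mk.measurable, hγ, fun u =>
    ⟨hγ.integrable_mul (hM u u.2), ?_⟩⟩
  rw [hγ.integral_mul_eq_inner_toLp (hM u u.2), hγ_toLp, ← hh u, M.toLpₗ_apply]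

end L2

theorem positivity_implies_exists_unbiased_estimator_general
    {Ω : Type*} [MeasurableSpace Ω] (μ : Measure Ω)
    (n : ℕ) (M : Fin n → Submodule ℝ (Ω → ℝ))
    (hMmeas : ∀ i, ∀ f ∈ M i, Measurable f)
    (hMsq : ∀ i, ∀ f ∈ M i, Integrable (fun ω => (f ω) ^ 2) μ)
    (L : ∀ i, (M i) →ₗ[ℝ] ℝ)
    (hpos : ∃ C : ℝ, ∀ i, ∀ u : M i,
      |L i u| ≤ C * Real.sqrt (∫ ω, ((u : Ω → ℝ) ω) ^ 2 ∂μ)) :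
    ∃ γ : Fin n → Ω → ℝ,
      (∀ i, Measurable (γ i)) ∧
      (∀ i, Integrable (fun ω => (γ i ω) ^ 2) μ) ∧
      ∀ f : (i : Fin n) → M i,
        Integrable (fun ω => (1 / (n : ℝ)) * ∑ i, γ i ω * ((f i : Ω → ℝ) ω)) μ ∧
        ∫ ω, (1 / (n : ℝ)) * ∑ i, γ i ω * ((f i : Ω → ℝ) ω) ∂μ
          = (1 / (n : ℝ)) * ∑ i, L i (f i) := by
  obtain ⟨C, hC⟩ := hpos
  have hM : ∀ i, ∀ f ∈ M i, MemLp f 2 μ := fun i f hf =>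
    (memLp_two_iff_integrable_sq (hMmeas i f hf).aestronglyMeasurable).mpr (hMsq i f hf)
  choose γ hγ_meas hγ hγL using fun i =>
    (M i).exists_memLp_integral_mul_eq (hM i) (L i) C (hC i)
  refine ⟨γ, hγ_meas, fun i => (hγ i).integrable_sq, fun f => ?_⟩
  have hint : ∀ i ∈ Finset.univ, Integrable (fun ω => γ i ω * (f i : Ω → ℝ) ω) μ :=
    fun i _ => (hγL i (f i)).1
  refine ⟨(integrable_finsetSum _ hint).const_mul _, ?_⟩
  rw [integral_const_mul, integral_finsetSum _ hint]
  simp only [fun i => (hγL i (f i)).2]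

/-- If each effect functional `L i` on model space `M i` satisfies positivity
(bounded by a constant times the L² seminorm induced by the design `μ`), then there
exists an unbiased estimator of the aggregate treatment effect of the form
`T (ω, y) = (1/n) ∑ i, γ i ω * y i`. -/
theorem positivity_implies_exists_unbiased_estimator
    {Ω : Type*} [MeasurableSpace Ω] (μ : Measure Ω) [IsProbabilityMeasure μ]
    (n : ℕ) (M : Fin n → Submodule ℝ (Ω → ℝ))
    (hMmeas : ∀ i, ∀ f ∈ M i, Measurable f)
    (hMsq : ∀ i, ∀ f ∈ M i, Integrable (fun ω => (f ω) ^ 2) μ)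
    (L : ∀ i, (M i) →ₗ[ℝ] ℝ)
    (hpos : ∃ C : ℝ, ∀ i, ∀ u : M i,
      |L i u| ≤ C * Real.sqrt (∫ ω, ((u : Ω → ℝ) ω) ^ 2 ∂μ)) :
    ∃ γ : Fin n → Ω → ℝ,
      (∀ i, Measurable (γ i)) ∧
      (∀ i, Integrable (fun ω => (γ i ω) ^ 2) μ) ∧
      ∀ f : (i : Fin n) → M i,
        Integrable (fun ω => (1 / (n : ℝ)) * ∑ i, γ i ω * ((f i : Ω → ℝ) ω)) μ ∧
        ∫ ω, (1 / (n : ℝ)) * ∑ i, γ i ω * ((f i : Ω → ℝ) ω) ∂μ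
          = (1 / (n : ℝ)) * ∑ i, L i (f i) :=
  positivity_implies_exists_unbiased_estimator_general μ n M hMmeas hMsq L hpos
end

section
/- Suppose there exists an unbiased estimator T : Ω × ℝⁿ → ℝ of the aggregate treatment effect, i.e., for every (f₁, …, fₙ) ∈ M₁ × ⋯ × Mₙ the function ω ↦ T(ω, (f₁(ω), …, fₙ(ω))) is μ-integrable with integral (1/n) Σᵢ Lᵢ(fᵢ). Then each Lᵢ satisfies simple positivity: for every i and every u ∈ Mᵢ with u = 0 μ-almost everywhere, Lᵢ(u) = 0. -/
/-! An estimator only sees the observed values `(f₁(ω), …, fₙ(ω))`. Placing `u` in slot `i`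
and `0` elsewhere yields a tuple observed almost surely the same as the zero tuple, so
unbiasedness gives `(1/n) Lᵢ(u) = (1/n) · 0`. -/

open MeasureTheory

section AggregateEffect

variable {Ω : Type*} {n : ℕ} {M : Fin n → Submodule ℝ (Ω → ℝ)} {L : ∀ i, (M i) →ₗ[ℝ] ℝ}

theorem sum_apply_single (i : Fin n) (u : M i) :
    ∑ j, L j ((Pi.single i u : (j : Fin n) → M j) j) = L i u := by
  simp only [Pi.apply_single (fun j => L j) (fun j => map_zero (L j)),
    Finset.sum_pi_single', Finset.mem_univ, if_true]

variable [MeasurableSpace Ω] {μ : Measure Ω}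

theorem sum_eq_of_unbiased_of_ae_eq (T : Ω × (Fin n → ℝ) → ℝ)
    (hunbiased : ∀ f : (i : Fin n) → M i,
      ∫ ω, T (ω, fun i => (f i : Ω → ℝ) ω) ∂μ = (1 / (n : ℝ)) * ∑ i, L i (f i))
    {f g : (i : Fin n) → M i} (hfg : ∀ i, (f i : Ω → ℝ) =ᵐ[μ] g i) :
    ∑ i, L i (f i) = ∑ i, L i (g i) := by
  rcases Nat.eq_zero_or_pos n with rfl | hn
  · simp
  have hT : (fun ω => T (ω, fun i => (f i : Ω → ℝ) ω))
      =ᵐ[μ] fun ω => T (ω, fun i => (g i : Ω → ℝ) ω) := by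
    filter_upwards [ae_all_iff.2 hfg] with ω hω
    simp only [hω]
  have h := integral_congr_ae hT
  rw [hunbiased, hunbiased] at h
  have hn' : (1 / (n : ℝ)) ≠ 0 := by positivity
  exact mul_left_cancel₀ hn' h

theorem coe_single_ae_eq_zero (i : Fin n) {u : M i} (hu : (u : Ω → ℝ) =ᵐ[μ] 0) (j : Fin n) :
    (((Pi.single i u : (j : Fin n) → M j) j : M j) : Ω → ℝ) =ᵐ[μ] ((0 : M j) : Ω → ℝ) := by
  by_cases h : j = i
  · subst h
    simpa using hu
  · simp [Pi.single_eq_of_ne h]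

end AggregateEffect

theorem unbiased_estimator_implies_simple_positivity_general
    {Ω : Type*} [MeasurableSpace Ω] (μ : Measure Ω)
    (n : ℕ) (M : Fin n → Submodule ℝ (Ω → ℝ))
    (L : ∀ i, (M i) →ₗ[ℝ] ℝ)
    (T : Ω × (Fin n → ℝ) → ℝ)
    (hunbiased : ∀ f : (i : Fin n) → M i,
      Integrable (fun ω => T (ω, fun i => (f i : Ω → ℝ) ω)) μ ∧
      ∫ ω, T (ω, fun i => (f i : Ω → ℝ) ω) ∂μ = (1 / (n : ℝ)) * ∑ i, L i (f i)) :
    ∀ i, ∀ u : M i, ((u : Ω → ℝ) =ᵐ[μ] (0 : Ω → ℝ)) → L i u = 0 := by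
  intro i u hu
  have h := sum_eq_of_unbiased_of_ae_eq T (fun f => (hunbiased f).2)
    (coe_single_ae_eq_zero i hu)
  simpa only [sum_apply_single, Pi.zero_apply, map_zero, Finset.sum_const_zero] using h

/-- If an unbiased estimator of the aggregate treatment effect exists, then every
effect functional `L i` satisfies simple positivity: it vanishes on every function in
the model space that is zero `μ`-almost everywhere. -/
theorem unbiased_estimator_implies_simple_positivity
    {Ω : Type*} [MeasurableSpace Ω] (μ : Measure Ω) [IsProbabilityMeasure μ]
    (n : ℕ) (M : Fin n → Submodule ℝ (Ω → ℝ))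
    (hMmeas : ∀ i, ∀ f ∈ M i, Measurable f)
    (hMsq : ∀ i, ∀ f ∈ M i, Integrable (fun ω => (f ω) ^ 2) μ)
    (L : ∀ i, (M i) →ₗ[ℝ] ℝ)
    (T : Ω × (Fin n → ℝ) → ℝ) (hT : Measurable T)
    (hunbiased : ∀ f : (i : Fin n) → M i,
      Integrable (fun ω => T (ω, fun i => (f i : Ω → ℝ) ω)) μ ∧
      ∫ ω, T (ω, fun i => (f i : Ω → ℝ) ω) ∂μ = (1 / (n : ℝ)) * ∑ i, L i (f i)) :
    ∀ i, ∀ u : M i, ((u : Ω → ℝ) =ᵐ[μ] (0 : Ω → ℝ)) → L i u = 0 :=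
  unbiased_estimator_implies_simple_positivity_general μ n M L T hunbiased
end
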